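/- For any integer n ≥ 0 and complex a, d, q with all denominators nonzero: [(1-a/d)(q-ad)/(a(1-a))] · Σ_{k=0}^{n-1} (d, q/d;q)_k / (a, aq;q)_k · (-a q^{-(k+1)/2})^k = (d,q/d;q)_n / ((a;q)_n)^2 · (-a q^{-(n-1)/2-2})^n · (1 - q^{n+1}/a) - (1 - q/a) - Σ_{k=1}^{n} (d,q/d;q)_k / ((a;q)_k)^2 · (1-q^{2k}) · (-a q^{-(k+3)/2})^k. -/
import Mathlib


open Finset

/-- The q-shifted factorial `(a;q)_k`. -/
noncomputable def qPoch (a q : ℂ) (k : ℕ) : ℂ := ∏ j ∈ Finset.range k, (1 - a * q ^ j)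

set_option maxHeartbeats 1000000

lemma qPoch_succ (a q : ℂ) (n : ℕ) : qPoch a q (n+1) = qPoch a q n * (1 - a * q ^ n) :=
  Finset.prod_range_succ _ _

lemma qPoch_succ' (a q : ℂ) (n : ℕ) : qPoch a q (n+1) = (1 - a) * qPoch (a*q) q n := by
  rw [qPoch, Finset.prod_range_succ']
  simp only [pow_zero, mul_one, qPoch]
  rw [mul_comm]
  congr 1
  exact Finset.prod_congr rfl (fun j _ => by rw [pow_succ]; ring_nf)

lemma neg_mul_zpow_pow (a s : ℂ) (e : ℤ) (n : ℕ) :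
    (-(a * s ^ e)) ^ n = (-1) ^ n * a ^ n * s ^ (e * n) := by
  rw [zpow_mul, zpow_natCast]
  rw [show -(a * s ^ e) = (-1) * a * (s ^ e) by ring, mul_pow, mul_pow]

/-- The b = c = 0 specialization of a bibasic transformation obtained via Abel summation.
`s` is a fixed square root of `q`, so that `q^{1/2} = s`. -/
theorem bibasic_b0c0 (a d q s : ℂ) (n : ℕ)
    (ha : a ≠ 0) (hd : d ≠ 0) (hq : q ≠ 0) (hs : s ≠ 0) (hsq : s ^ 2 = q)
    (ha1 : 1 - a ≠ 0)
    (hden : ∀ k : ℕ, qPoch a q k ≠ 0) (hden' : ∀ k : ℕ, qPoch (a * q) q k ≠ 0) :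
    (1 - a / d) * (q - a * d) / (a * (1 - a)) *
        ∑ k ∈ Finset.range n,
          (qPoch d q k * qPoch (q / d) q k) / (qPoch a q k * qPoch (a * q) q k) *
            (-(a * s ^ (-((k : ℤ) + 1)))) ^ k =
      (qPoch d q n * qPoch (q / d) q n) / (qPoch a q n) ^ 2 *
          (-(a * s ^ (-((n : ℤ) - 1) - 4))) ^ n * (1 - q ^ (n + 1) / a)
        - (1 - q / a)
        - ∑ k ∈ Finset.Icc 1 n,
            (qPoch d q k * qPoch (q / d) q k) / (qPoch a q k) ^ 2 *
              (1 - q ^ (2 * k)) * (-(a * s ^ (-((k : ℤ) + 3)))) ^ k := by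
  induction n with
  | zero => simp [qPoch]
  | succ n ih =>
    have hZ := hden n
    have hZ1 := hden (n+1)
    have hau : 1 - a * q ^ n ≠ 0 := by
      intro h; exact hZ1 (by rw [qPoch_succ, h, mul_zero])
    have hu : (q : ℂ) ^ n ≠ 0 := pow_ne_zero _ hq
    have hWeq : qPoch (a*q) q n = qPoch a q n * (1 - a * q ^ n) / (1 - a) := by
      rw [eq_div_iff ha1, mul_comm _ (1-a), ← qPoch_succ', qPoch_succ]
    have key :
        (1 - a / d) * (q - a * d) / (a * (1 - a)) *
          ((qPoch d q n * qPoch (q / d) q n) / (qPoch a q n * qPoch (a * q) q n) *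
            (-(a * s ^ (-((n : ℤ) + 1)))) ^ n)
        + (qPoch d q n * qPoch (q / d) q n) / (qPoch a q n) ^ 2 *
            (-(a * s ^ (-((n : ℤ) - 1) - 4))) ^ n * (1 - q ^ (n + 1) / a)
        + (qPoch d q (n+1) * qPoch (q / d) q (n+1)) / (qPoch a q (n+1)) ^ 2 *
            (1 - q ^ (2 * (n+1))) * (-(a * s ^ (-((↑(n+1) : ℤ) + 3)))) ^ (n+1) =
        (qPoch d q (n+1) * qPoch (q / d) q (n+1)) / (qPoch a q (n+1)) ^ 2 *
            (-(a * s ^ (-((↑(n+1) : ℤ) - 1) - 4))) ^ (n+1) * (1 - q ^ (n+1+1) / a) := by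
      rw [qPoch_succ d, qPoch_succ (q/d), qPoch_succ a, hWeq]
      simp only [neg_mul_zpow_pow a s]
      set P : ℂ := s ^ ((-((↑(n+1):ℤ)) - 3) * (↑(n+1):ℤ)) with hPdef
      have hs4 : ∀ m : ℕ, s ^ ((m:ℤ)) = s ^ m := fun m => zpow_natCast s m
      have hP1 : s ^ ((-((n:ℤ)+1)) * (n:ℤ)) = P * (q ^ n * q ^ n * (q * q)) := by
        rw [hPdef, show (-((n:ℤ)+1)) * (n:ℤ) = (-((↑(n+1):ℤ)) - 3) * (↑(n+1):ℤ) + (4*(n:ℤ)+4) by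
          push_cast; ring, zpow_add₀ hs,
          show (4*(n:ℤ)+4) = ((4*n+4 : ℕ) : ℤ) by push_cast; ring, zpow_natCast]
        congr 1
        rw [show 4*n+4 = 2*(2*n+2) by ring, pow_mul, hsq,
          show 2*n+2 = n+(n+(1+1)) by ring, pow_add, pow_add, pow_add]; ring
      have hP2 : s ^ ((-((n:ℤ)-1)-4) * (n:ℤ)) = P * (q ^ n * (q * q)) := by
        rw [hPdef, show (-((n:ℤ)-1)-4) * (n:ℤ) = (-((↑(n+1):ℤ)) - 3) * (↑(n+1):ℤ) + (2*(n:ℤ)+4) by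
          push_cast; ring, zpow_add₀ hs,
          show (2*(n:ℤ)+4) = ((2*n+4 : ℕ) : ℤ) by push_cast; ring, zpow_natCast]
        congr 1
        rw [show 2*n+4 = 2*(n+2) by ring, pow_mul, hsq, show n+2 = n+(1+1) by ring,
          pow_add, pow_add]; ring
      have hP3 : s ^ ((-((↑(n+1):ℤ)+3)) * (↑(n+1):ℤ)) = P := by
        rw [hPdef]; congr 1; try (push_cast; ring)
      have hP4 : s ^ ((-((↑(n+1):ℤ)-1)-4) * (↑(n+1):ℤ)) = P := by
        rw [hPdef]; congr 1; try (push_cast; ring)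
      rw [hP1, hP2, hP3, hP4]
      have hq3 : (q:ℂ)^(2*(n+1)) = (q^n)*(q^n)*(q*q) := by
        rw [show 2*(n+1) = n+(n+(1+1)) by ring, pow_add, pow_add, pow_add]; ring
      have ha4 : (a:ℂ)^(n+1) = a^n * a := pow_succ a n
      have hm1 : ((-1:ℂ))^(n+1) = (-1)^n * (-1) := pow_succ _ n
      have hq1 : (q:ℂ)^(n+1) = q^n * q := pow_succ q n
      have hq2 : (q:ℂ)^(n+1+1) = q^n * (q*q) := by rw [pow_succ, pow_succ]; ring
      rw [hq3, ha4, hm1, hq1, hq2]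
      set X := qPoch d q n
      set Y := qPoch (q/d) q n
      set Z := qPoch a q n
      set u : ℂ := q ^ n
      set E : ℂ := (-1 : ℂ) ^ n
      set A0 : ℂ := a ^ n
      have hD : d * a * Z ^ 2 * (1 - a*u) ^ 2 ≠ 0 := by
        apply mul_ne_zero (mul_ne_zero (mul_ne_zero hd ha) (pow_ne_zero _ hZ)) (pow_ne_zero _ hau)
      apply mul_left_cancel₀ hD
      have e1 : d * a * Z ^ 2 * (1 - a*u) ^ 2 *
          ((1 - a / d) * (q - a * d) / (a * (1 - a)) *
            (X * Y / (Z * (Z * (1 - a * u) / (1 - a))) * (E * A0 * (P * (u * u * (q * q)))))) =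
          (d - a) * (q - a * d) * (X * Y) * (E * A0 * P) * (u * u * (q * q)) * (1 - a*u) := by
        field_simp
      have e2 : d * a * Z ^ 2 * (1 - a*u) ^ 2 *
          (X * Y / Z ^ 2 * (E * A0 * (P * (u * (q * q)))) * (1 - u * q / a)) =
          d * (1 - a*u) ^ 2 * (X * Y) * (E * A0 * P) * (u * (q * q)) * (a - u * q) := by
        field_simp
      have e3 : d * a * Z ^ 2 * (1 - a*u) ^ 2 *
          (X * (1 - d * u) * (Y * (1 - q / d * u)) / (Z * (1 - a * u)) ^ 2 *
            (1 - u * u * (q * q)) * (E * -1 * (A0 * a) * P)) =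
          a * (X * (1 - d * u)) * (Y * (d - q * u)) * (1 - u * u * (q * q)) *
            (E * -1 * (A0 * a) * P) := by
        field_simp
      have e4 : d * a * Z ^ 2 * (1 - a*u) ^ 2 *
          (X * (1 - d * u) * (Y * (1 - q / d * u)) / (Z * (1 - a * u)) ^ 2 *
            (E * -1 * (A0 * a) * P) * (1 - u * (q * q) / a)) =
          (X * (1 - d * u)) * (Y * (d - q * u)) * (E * -1 * (A0 * a) * P) *
            (a - u * (q * q)) := by
        field_simp
      linear_combination e1 + e2 + e3 - e4
    rw [Finset.sum_range_succ, Finset.sum_Icc_succ_top (by omega : 1 ≤ n+1), mul_add, ih]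
    linear_combination key
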